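/- arXiv:1910.08923 — 2 statements merged into one kernel-verified Lean document; each statement's English description precedes it below -/
import Mathlib

section
/- Every element f of 𝒢̄ can be written as f = g ∘ i, where g ∈ 𝒢̄ is (the class of) an interval exchange transformation and i ∈ 𝒢̄ is an involution which is a commutator in 𝒢̄. -/
open scoped commutatorElement

/-- `f` is an interval exchange transformation (IET) of `[0,1)`, viewed as a permutation of `ℝ`
that fixes every point outside `[0,1)`: there is a finite subdivision
`0 = a 0 < a 1 < … < a (m+1) = 1` such that `f` is a translation on each half-open
interval `[a i, a (i+1))`. -/
def IsIET (f : Equiv.Perm ℝ) : Prop :=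
  (∀ x : ℝ, x ∉ Set.Ico (0 : ℝ) 1 → f x = x) ∧
  ∃ (m : ℕ) (a : Fin (m + 2) → ℝ),
    a 0 = 0 ∧ a (Fin.last (m + 1)) = 1 ∧ StrictMono a ∧
    ∀ i : Fin (m + 1), ∃ c : ℝ, ∀ x ∈ Set.Ico (a i.castSucc) (a i.succ), f x = x + c

/-- `f` is an interval exchange transformation with flips (FIET) of `[0,1)`, viewed as a
permutation of `ℝ` fixing every point outside `[0,1)`: there is a finite subdivision
`0 = a 0 < a 1 < … < a (m+1) = 1` such that on each open interval `(a i, a (i+1))`, `f` is an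
isometry, i.e. of the form `x ↦ x + c` or `x ↦ c - x`. -/
def IsFIET (f : Equiv.Perm ℝ) : Prop :=
  (∀ x : ℝ, x ∉ Set.Ico (0 : ℝ) 1 → f x = x) ∧
  ∃ (m : ℕ) (a : Fin (m + 2) → ℝ),
    a 0 = 0 ∧ a (Fin.last (m + 1)) = 1 ∧ StrictMono a ∧
    ∀ i : Fin (m + 1),
      (∃ c : ℝ, ∀ x ∈ Set.Ioo (a i.castSucc) (a i.succ), f x = x + c) ∨
      (∃ c : ℝ, ∀ x ∈ Set.Ioo (a i.castSucc) (a i.succ), f x = c - x)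

/-- Two permutations of `ℝ` agree outside a finite set; this is equality of the classes in the
quotient group `𝒢̄` of FIETs modulo maps that are the identity off a finite set. -/
def FEq (f g : Equiv.Perm ℝ) : Prop := {x : ℝ | f x ≠ g x}.Finite

/-- The set of commutators `⁅a, b⁆ = a * b * a⁻¹ * b⁻¹` of interval exchange
transformations. -/
def IETCommutators : Set (Equiv.Perm ℝ) :=
  {x | ∃ a b : Equiv.Perm ℝ, IsIET a ∧ IsIET b ∧ x = ⁅a, b⁆}

/-- The set of commutators `⁅a, b⁆ = a * b * a⁻¹ * b⁻¹` of interval exchange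
transformations with flips. -/
def FIETCommutators : Set (Equiv.Perm ℝ) :=
  {x | ∃ a b : Equiv.Perm ℝ, IsFIET a ∧ IsFIET b ∧ x = ⁅a, b⁆}

/-- `g` is a product of at most `n` commutators of elements of the group `𝒢` of interval
exchange transformations; i.e. the commutator length of `g` in `𝒢` is at most `n`. -/
def IsProdOfIETCommutators (n : ℕ) (g : Equiv.Perm ℝ) : Prop :=
  ∃ l : List (Equiv.Perm ℝ), l.length ≤ n ∧ (∀ x ∈ l, x ∈ IETCommutators) ∧ g = l.prod

/-- `f ∈ 𝒢_m`: `f` is an IET of `[0,1)` admitting a subdivision into at most `m` half-open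
intervals on each of which it is a translation. -/
def MemGm (m : ℕ) (f : Equiv.Perm ℝ) : Prop :=
  (∀ x : ℝ, x ∉ Set.Ico (0 : ℝ) 1 → f x = x) ∧
  ∃ (k : ℕ) (a : Fin (k + 2) → ℝ), k + 1 ≤ m ∧
    a 0 = 0 ∧ a (Fin.last (k + 1)) = 1 ∧ StrictMono a ∧
    ∀ i : Fin (k + 1), ∃ c : ℝ, ∀ x ∈ Set.Ico (a i.castSucc) (a i.succ), f x = x + c

/-- `g` is periodic: every orbit `{gⁿ x : n ∈ ℤ}` is finite. -/
def IsPeriodicPerm (g : Equiv.Perm ℝ) : Prop :=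
  ∀ x : ℝ, (Set.range fun n : ℤ => (g ^ n) x).Finite

/-- `f` is a restricted rotation: for some half-open interval `J = [a, b) ⊆ [0,1)` and some
`α ∈ [0, b - a)`, `f` is the identity outside `J` and sends `x ∈ J` to
`a + ((x - a + α) mod (b - a))`. -/
def IsRestrictedRotation (f : Equiv.Perm ℝ) : Prop :=
  ∃ a b α : ℝ, 0 ≤ a ∧ a < b ∧ b ≤ 1 ∧ α ∈ Set.Ico (0 : ℝ) (b - a) ∧
    (∀ x : ℝ, x ∉ Set.Ico a b → f x = x) ∧
    ∀ x ∈ Set.Ico a b, f x = x + α - (b - a) * (⌊(x - a + α) / (b - a)⌋ : ℝ)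

/-- `Δ_α`: the additive subgroup of `ℝ` generated by `α 0, …, α (p-1)` and `1`. -/
def Delta {p : ℕ} (α : Fin p → ℝ) : AddSubgroup ℝ :=
  AddSubgroup.closure (Set.range α ∪ {1})

/-- `g ∈ Γ_α`: `g` is an IET all of whose discontinuity points (as a map of `[0,1)`)
belong to the subgroup `Δ`. -/
def MemGamma (Δ : AddSubgroup ℝ) (g : Equiv.Perm ℝ) : Prop :=
  IsIET g ∧
  ∀ x ∈ Set.Ico (0 : ℝ) 1, ¬ContinuousWithinAt (⇑g) (Set.Ico (0 : ℝ) 1) x → x ∈ Δ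

/-- `g ∈ Γ_α(J)` for `J = [c, d)`: `g` is an IET supported in `[c, d)` all of whose
discontinuity points belong to `Δ`. -/
def MemGammaJ (Δ : AddSubgroup ℝ) (c d : ℝ) (g : Equiv.Perm ℝ) : Prop :=
  IsIET g ∧ (∀ x : ℝ, x ∉ Set.Ico c d → g x = x) ∧
  ∀ x ∈ Set.Ico (0 : ℝ) 1, ¬ContinuousWithinAt (⇑g) (Set.Ico (0 : ℝ) 1) x → x ∈ Δ

/-!
Precomposing `f` with the involution `i` that reflects each piece on which `f` is a flip turns
`f` into a translation on every piece; changing `f ∘ i` at the finitely many cut points gives an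
interval exchange `g` with `f = g ∘ i` in `𝒢̄`. The reflection of an interval `(p, q)` is the
commutator `[u, v] = u (v u v)` of the involution `u` reflecting only the two outer quarters and
the involution `v` exchanging the first quarter with the second and the third with the fourth,
since `v u v` reflects the two inner quarters.
-/

open Set Function Equiv

section Glue

variable {α ι : Type*} {S : ι → Set α} {F G : ι → α → α} {x : α}

variable (S F) in
open Classical in
/-- Where several `S k` overlap, the `F k` applied is an arbitrary one of them. -/
noncomputable def glue (x : α) : α :=
  if h : ∃ k, x ∈ S k then F h.choose x else x

theorem glue_apply_of_mem (hS : Pairwise (Disjoint on S)) {k : ι} (hx : x ∈ S k) :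
    glue S F x = F k x := by
  have h : ∃ k, x ∈ S k := ⟨k, hx⟩
  rw [glue, dif_pos h, hS.eq (not_disjoint_iff.2 ⟨x, h.choose_spec, hx⟩)]

theorem glue_apply_eq_self (hx : ∀ k, x ∈ S k → F k x = x) : glue S F x = x := by
  unfold glue
  split_ifs with h
  exacts [hx _ h.choose_spec, rfl]

theorem glue_apply_of_forall_notMem (hx : ∀ k, x ∉ S k) : glue S F x = x :=
  glue_apply_eq_self fun k hk => absurd hk (hx k)

theorem glue_comp (hS : Pairwise (Disjoint on S)) (hG : ∀ k, MapsTo (G k) (S k) (S k)) :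
    glue S F ∘ glue S G = glue S fun k => F k ∘ G k := by
  ext x
  by_cases hx : ∃ k, x ∈ S k
  · obtain ⟨k, hk⟩ := hx
    simp only [comp_apply, glue_apply_of_mem hS hk, glue_apply_of_mem hS (hG k hk)]
  · simp only [comp_apply, glue_apply_of_forall_notMem (not_exists.1 hx)]

theorem glue_involutive (hS : Pairwise (Disjoint on S)) (hF : ∀ k, MapsTo (F k) (S k) (S k))
    (hinv : ∀ k, ∀ x ∈ S k, F k (F k x) = x) : Involutive (glue S F) := by
  intro x
  by_cases hx : ∃ k, x ∈ S k
  · obtain ⟨k, hk⟩ := hx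
    rw [glue_apply_of_mem hS hk, glue_apply_of_mem hS (hF k hk), hinv k x hk]
  · have hx := not_exists.1 hx
    rw [glue_apply_of_forall_notMem hx, glue_apply_of_forall_notMem hx]

end Glue

theorem Set.Ioo_subset_Ioo_or_disjoint {α : Type*} [LinearOrder α] {a b c d : α}
    (hc : c ∉ Ioo a b) (hd : d ∉ Ioo a b) : Ioo a b ⊆ Ioo c d ∨ Disjoint (Ioo a b) (Ioo c d) := by
  refine or_iff_not_imp_right.2 fun h => ?_
  obtain ⟨z, hzab, hzcd⟩ := not_disjoint_iff.1 h
  intro y hy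
  constructor
  · by_contra! hyc
    exact hc ⟨hy.1.trans_le hyc, hzcd.1.trans hzab.2⟩
  · by_contra! hdy
    exact hd ⟨hzab.1.trans hzcd.2, hdy.trans_lt hy.2⟩

theorem Function.Injective.surjective_of_finite_ne {α : Type*} {φ : α → α} (hφ : Injective φ)
    (e : Perm α) (hfin : {x | φ x ≠ e x}.Finite) : Surjective φ := by
  set ψ := e.symm ∘ φ
  have hD : {x | ψ x ≠ x} = {x | φ x ≠ e x} := by
    ext x; simp [ψ, e.symm_apply_eq]
  have hψ : Injective ψ := e.symm.injective.comp hφ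
  have hmaps : MapsTo ψ {x | ψ x ≠ x} {x | ψ x ≠ x} := fun x hx hψx => hx (hψ hψx)
  have hsurj := ((hD ▸ hfin).injOn_iff_bijOn_of_mapsTo hmaps).1 hψ.injOn |>.surjOn
  have hφψ : ⇑e ∘ ψ = φ := by ext; simp [ψ]
  suffices Surjective ψ from hφψ ▸ e.surjective.comp this
  intro y
  by_cases hy : ψ y = y
  · exact ⟨y, hy⟩
  · obtain ⟨x, -, hx⟩ := hsurj hy
    exact ⟨x, hx⟩

/-- The points `x + t`, `0 < t < ε`, avoid the finite exceptional set for small `t`, and there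
`φ` inherits the injectivity of `ψ`. -/
theorem injective_of_finite_ne_of_right_translation {φ ψ : ℝ → ℝ} (hψ : Injective ψ)
    (hfin : {x | φ x ≠ ψ x}.Finite)
    (hφ : ∀ x, ∃ ε > 0, ∀ t ∈ Ioo 0 ε, φ (x + t) = φ x + t) : Injective φ := by
  intro x y hxy
  obtain ⟨εx, hεx, hx⟩ := hφ x
  obtain ⟨εy, hεy, hy⟩ := hφ y
  set D := {z | φ z ≠ ψ z}
  have hbad : ((x + ·) ⁻¹' D ∪ (y + ·) ⁻¹' D).Finite :=
    (hfin.preimage (add_right_injective x).injOn).union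
      (hfin.preimage (add_right_injective y).injOn)
  obtain ⟨t, ht, htbad⟩ := ((Ioo_infinite (lt_min hεx hεy)).sdiff hbad).nonempty
  simp only [D, mem_union, mem_preimage, mem_ofPred_eq, not_or, not_not] at htbad
  have : ψ (x + t) = ψ (y + t) := by
    rw [← htbad.1, ← htbad.2, hx t ⟨ht.1, ht.2.trans_le (min_le_left _ _)⟩,
      hy t ⟨ht.1, ht.2.trans_le (min_le_right _ _)⟩, hxy]
  simpa using hψ this

def IsTranslationOrFlipOn (F : ℝ → ℝ) (s : Set ℝ) : Prop :=
  (∃ c, ∀ x ∈ s, F x = x + c) ∨ ∃ c, ∀ x ∈ s, F x = c - x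

theorem IsTranslationOrFlipOn.mono {F : ℝ → ℝ} {s t : Set ℝ} (h : IsTranslationOrFlipOn F t)
    (hst : s ⊆ t) : IsTranslationOrFlipOn F s :=
  h.imp (fun ⟨c, hc⟩ => ⟨c, fun x hx => hc x (hst hx)⟩)
    fun ⟨c, hc⟩ => ⟨c, fun x hx => hc x (hst hx)⟩

theorem IsTranslationOrFlipOn.congr {F G : ℝ → ℝ} {s : Set ℝ} (h : IsTranslationOrFlipOn F s)
    (hFG : EqOn F G s) : IsTranslationOrFlipOn G s :=
  h.imp (fun ⟨c, hc⟩ => ⟨c, fun x hx => (hFG hx).symm.trans (hc x hx)⟩)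
    fun ⟨c, hc⟩ => ⟨c, fun x hx => (hFG hx).symm.trans (hc x hx)⟩

section Subdivision

variable {m : ℕ} {a : Fin (m + 2) → ℝ}

theorem pairwise_disjoint_Ico_castSucc_succ (ha : Monotone a) :
    Pairwise (Disjoint on fun j : Fin (m + 1) => Ico (a j.castSucc) (a j.succ)) := by
  refine (pairwise_disjoint_on _).2 fun j k hjk => Set.disjoint_left.2 fun x hj hk => ?_
  exact (hj.2.trans_le (ha (Fin.castSucc_lt_iff_succ_le.1 hjk))).not_ge hk.1

theorem pairwise_disjoint_Ioo_castSucc_succ (ha : Monotone a) :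
    Pairwise (Disjoint on fun j : Fin (m + 1) => Ioo (a j.castSucc) (a j.succ)) :=
  (pairwise_disjoint_Ico_castSucc_succ ha).mono fun _ _ h =>
    h.mono Ioo_subset_Ico_self Ioo_subset_Ico_self

theorem exists_mem_Ico_castSucc_succ {x : ℝ} (hx : x ∈ Ico (a 0) (a (Fin.last (m + 1)))) :
    ∃ j : Fin (m + 1), x ∈ Ico (a j.castSucc) (a j.succ) := by
  have hcast : ∀ n (hn : n < m + 2), a (Fin.ofNat (m + 2) n) = a ⟨n, hn⟩ := fun n hn => by
    congr 1; ext; simp [Nat.mod_eq_of_lt hn]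
  have := Ico_subset_biUnion_Ico (m + 1) (fun n => a (Fin.ofNat (m + 2) n))
    (by simpa [hcast] using hx)
  simp only [Finset.mem_range, mem_iUnion] at this
  obtain ⟨i, hi, hx⟩ := this
  refine ⟨⟨i, hi⟩, ?_⟩
  rwa [hcast i (by omega), hcast (i + 1) (by omega)] at hx

end Subdivision

theorem exists_subdivision_avoiding {C : Set ℝ} (hC : C.Finite) (hC01 : C ⊆ Icc 0 1) :
    ∃ (m : ℕ) (a : Fin (m + 2) → ℝ), a 0 = 0 ∧ a (Fin.last (m + 1)) = 1 ∧ StrictMono a ∧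
      ∀ j : Fin (m + 1), ∀ x ∈ Ioo (a j.castSucc) (a j.succ), x ∉ C := by
  classical
  set s := insert 0 (insert 1 hC.toFinset)
  have hs01 : ∀ x ∈ s, x ∈ Icc (0 : ℝ) 1 := by
    simp only [s, Finset.mem_insert, Set.Finite.mem_toFinset]
    rintro x (rfl | rfl | hx)
    exacts [⟨le_rfl, zero_le_one⟩, ⟨zero_le_one, le_rfl⟩, hC01 hx]
  obtain ⟨m, hm⟩ : ∃ m, s.card = m + 2 :=
    Nat.exists_eq_add_of_le' (Finset.one_lt_card.2 ⟨0, by simp [s], 1, by simp [s], zero_ne_one⟩)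
  set a := s.orderEmbOfFin hm
  have hrange : range a = s := Finset.range_orderEmbOfFin s hm
  obtain ⟨i₀, hi₀⟩ : (0 : ℝ) ∈ range a := by simp [hrange, s]
  obtain ⟨i₁, hi₁⟩ : (1 : ℝ) ∈ range a := by simp [hrange, s]
  refine ⟨m, a, ?_, ?_, a.strictMono, fun j x hx hxC => ?_⟩
  · exact le_antisymm (hi₀ ▸ a.monotone (Fin.zero_le _)) (hs01 _ (s.orderEmbOfFin_mem hm _)).1
  · exact le_antisymm (hs01 _ (s.orderEmbOfFin_mem hm _)).2 (hi₁ ▸ a.monotone (Fin.le_last _))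
  · obtain ⟨i, rfl⟩ : x ∈ range a := by simp [hrange, s, hxC]
    have h1 := a.strictMono.lt_iff_lt.1 hx.1
    have h2 := a.strictMono.lt_iff_lt.1 hx.2
    rw [Fin.lt_def] at h1 h2
    simp only [Fin.val_castSucc, Fin.val_succ] at h1 h2
    omega

/-- Cut `[0,1]` at all the endpoints. -/
theorem isFIET_of_forall_isTranslationOrFlipOn {ι : Type*} [Finite ι] {l r : ι → ℝ} (F : Perm ℝ)
    (hl : ∀ k, 0 ≤ l k) (hlr : ∀ k, l k ≤ r k) (hr : ∀ k, r k ≤ 1)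
    (hfix : ∀ x, (∀ k, x ∉ Ioo (l k) (r k)) → F x = x)
    (hF : ∀ k, IsTranslationOrFlipOn F (Ioo (l k) (r k))) : IsFIET F := by
  refine ⟨fun x hx => hfix x fun k hk => hx ⟨(hl k).trans hk.1.le, hk.2.trans_le (hr k)⟩, ?_⟩
  obtain ⟨m, a, ha0, ha1, ha, hgap⟩ := exists_subdivision_avoiding
    ((finite_range l).union (finite_range r))
    (union_subset (range_subset_iff.2 fun k => ⟨hl k, (hlr k).trans (hr k)⟩)
      (range_subset_iff.2 fun k => ⟨(hl k).trans (hlr k), hr k⟩))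
  refine ⟨m, a, ha0, ha1, ha, fun j => ?_⟩
  by_cases hin : ∃ k, Ioo (a j.castSucc) (a j.succ) ⊆ Ioo (l k) (r k)
  · obtain ⟨k, hk⟩ := hin
    exact (hF k).mono hk
  · refine Or.inl ⟨0, fun x hx => ?_⟩
    rw [add_zero]
    refine hfix x fun k hxk => ?_
    have hdisj := (Ioo_subset_Ioo_or_disjoint (fun h => hgap j _ h (Or.inl ⟨k, rfl⟩))
      (fun h => hgap j _ h (Or.inr ⟨k, rfl⟩))).resolve_left (not_exists.1 hin k)
    exact Set.disjoint_left.1 hdisj hx hxk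

/-- Take for `g` the same translations on the half-open pieces: it agrees with `e` off the cut
points, hence is injective, hence bijective. -/
theorem exists_isIET_feq_of_translation_on_pieces (e : Perm ℝ)
    (he : ∀ x, x ∉ Ico (0 : ℝ) 1 → e x = x) {m : ℕ} {a : Fin (m + 2) → ℝ} (ha0 : a 0 = 0)
    (ha1 : a (Fin.last (m + 1)) = 1) (ha : StrictMono a)
    (htrans : ∀ j : Fin (m + 1), ∃ c, ∀ x ∈ Ioo (a j.castSucc) (a j.succ), e x = x + c) :
    ∃ g : Perm ℝ, IsIET g ∧ FEq e g := by
  choose c hc using htrans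
  set I := fun j : Fin (m + 1) => Ico (a j.castSucc) (a j.succ)
  have hI : Pairwise (Disjoint on I) := pairwise_disjoint_Ico_castSucc_succ ha.monotone
  have hI01 : ∀ j, I j ⊆ Ico 0 1 := fun j x hx =>
    ⟨ha0 ▸ (ha.monotone (Fin.zero_le _)).trans hx.1,
      hx.2.trans_le (ha1 ▸ ha.monotone (Fin.le_last _))⟩
  have hcover : ∀ x ∈ Ico (0 : ℝ) 1, ∃ j, x ∈ I j := fun x hx =>
    exists_mem_Ico_castSucc_succ (by rwa [ha0, ha1])
  set φ := glue I fun j x => x + c j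
  have hφI : ∀ j, ∀ x ∈ I j, φ x = x + c j := fun j x hx => glue_apply_of_mem hI hx
  have hφout : ∀ x, x ∉ Ico (0 : ℝ) 1 → φ x = x := fun x hx =>
    glue_apply_of_forall_notMem fun j hj => hx (hI01 j hj)
  have hφe : {x | φ x ≠ e x} ⊆ range a := by
    intro x hx
    by_contra hxa
    refine hx ?_
    by_cases hx01 : x ∈ Ico (0 : ℝ) 1
    · obtain ⟨j, hj⟩ := hcover x hx01
      have hlt : a j.castSucc < x := lt_of_le_of_ne hj.1 fun h => hxa ⟨_, h⟩
      rw [hφI j x hj, hc j x ⟨hlt, hj.2⟩]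
    · rw [hφout x hx01, he x hx01]
  have hright : ∀ x, ∃ ε > 0, ∀ t ∈ Ioo 0 ε, φ (x + t) = φ x + t := by
    intro x
    by_cases hx01 : x ∈ Ico (0 : ℝ) 1
    · obtain ⟨j, hj⟩ := hcover x hx01
      refine ⟨a j.succ - x, sub_pos.2 hj.2, fun t ht => ?_⟩
      rw [hφI j x hj, hφI j (x + t) ⟨by linarith [hj.1, ht.1], by linarith [ht.2]⟩]
      ring
    · rcases not_and_or.1 hx01 with hx0 | hx1
      · push Not at hx0
        refine ⟨-x, by linarith, fun t ht => ?_⟩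
        rw [hφout x hx01, hφout (x + t) fun h => by linarith [h.1, ht.2]]
      · push Not at hx1
        refine ⟨1, one_pos, fun t ht => ?_⟩
        rw [hφout x hx01, hφout (x + t) fun h => by linarith [h.2, ht.1]]
  have hfin : {x | φ x ≠ e x}.Finite := (finite_range a).subset hφe
  have hinj := injective_of_finite_ne_of_right_translation e.injective hfin hright
  refine ⟨Equiv.ofBijective φ ⟨hinj, hinj.surjective_of_finite_ne e hfin⟩,
    ⟨hφout, m, a, ha0, ha1, ha, fun j => ⟨c j, hφI j⟩⟩, ?_⟩
  exact hfin.subset fun x hx => Ne.symm hx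

section Quarters

variable {p q x : ℝ}

/-- Quarters are numbered `0, …, 3`. -/
def quarter (p q : ℝ) (n : ℕ) : Set ℝ :=
  Ioo (p + n * ((q - p) / 4)) (p + (n + 1) * ((q - p) / 4))

theorem quarter_subset_Ioo {n : ℕ} (hn : n < 4) : quarter p q n ⊆ Ioo p q := by
  intro x hx
  have hn' : (n : ℝ) + 1 ≤ 4 := by exact_mod_cast hn
  have hδ : 0 < (q - p) / 4 := by linarith [hx.1.trans hx.2]
  constructor <;> nlinarith [hx.1, hx.2, (n.cast_nonneg : (0 : ℝ) ≤ n)]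

theorem add_mem_quarter_succ {n : ℕ} (hx : x ∈ quarter p q n) :
    x + (q - p) / 4 ∈ quarter p q (n + 1) := by
  simp only [quarter, mem_Ioo, Nat.cast_add, Nat.cast_one] at hx ⊢
  constructor <;> linarith [hx.1, hx.2]

theorem sub_mem_quarter {n : ℕ} (hx : x ∈ quarter p q (n + 1)) :
    x - (q - p) / 4 ∈ quarter p q n := by
  simp only [quarter, mem_Ioo, Nat.cast_add, Nat.cast_one] at hx ⊢
  constructor <;> linarith [hx.1, hx.2]

theorem reflect_mem_quarter {n n' : ℕ} (hnn' : n + n' = 3) (hx : x ∈ quarter p q n) :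
    p + q - x ∈ quarter p q n' := by
  have h : (n : ℝ) + n' = 3 := by exact_mod_cast hnn'
  simp only [quarter, mem_Ioo] at hx ⊢
  constructor <;> nlinarith [hx.1, hx.2]

theorem mem_quarter_of_ne (hx : x ∈ Ioo p q) (h₁ : x ≠ p + (q - p) / 4)
    (h₂ : x ≠ p + 2 * ((q - p) / 4)) (h₃ : x ≠ p + 3 * ((q - p) / 4)) :
    x ∈ quarter p q 0 ∪ quarter p q 1 ∪ quarter p q 2 ∪ quarter p q 3 := by
  simp only [quarter, mem_union, mem_Ioo, Nat.cast_zero, Nat.cast_one, Nat.cast_ofNat, or_assoc]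
  rcases h₁.lt_or_gt with h₁ | h₁ <;> rcases h₂.lt_or_gt with h₂ | h₂ <;>
    rcases h₃.lt_or_gt with h₃ | h₃
  all_goals first
    | (left; constructor <;> linarith [hx.1])
    | (right; left; constructor <;> linarith)
    | (right; right; left; constructor <;> linarith)
    | (right; right; right; constructor <;> linarith [hx.2])

open Classical in
noncomputable def outerFlip (p q x : ℝ) : ℝ :=
  if x ∈ quarter p q 0 ∪ quarter p q 3 then p + q - x else x

open Classical in
noncomputable def quarterSwap (p q x : ℝ) : ℝ :=
  if x ∈ quarter p q 0 ∪ quarter p q 2 then x + (q - p) / 4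
  else if x ∈ quarter p q 1 ∪ quarter p q 3 then x - (q - p) / 4 else x

theorem outerFlip_of_mem_outer (hx : x ∈ quarter p q 0 ∪ quarter p q 3) :
    outerFlip p q x = p + q - x :=
  if_pos hx

theorem outerFlip_of_mem_inner (hx : x ∈ quarter p q 1 ∪ quarter p q 2) : outerFlip p q x = x := by
  refine if_neg ?_
  simp only [quarter, mem_union, mem_Ioo, Nat.cast_zero, Nat.cast_one, Nat.cast_ofNat] at hx ⊢
  rcases hx with hx | hx <;> rintro (h | h) <;> linarith [hx.1, hx.2, h.1, h.2]

theorem outerFlip_of_notMem (h₀ : x ∉ quarter p q 0) (h₃ : x ∉ quarter p q 3) :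
    outerFlip p q x = x :=
  if_neg (by rintro (h | h) <;> contradiction)

theorem quarterSwap_of_mem_even (hx : x ∈ quarter p q 0 ∪ quarter p q 2) :
    quarterSwap p q x = x + (q - p) / 4 :=
  if_pos hx

theorem quarterSwap_of_mem_odd (hx : x ∈ quarter p q 1 ∪ quarter p q 3) :
    quarterSwap p q x = x - (q - p) / 4 := by
  rw [quarterSwap, if_neg, if_pos hx]
  simp only [quarter, mem_union, mem_Ioo, Nat.cast_zero, Nat.cast_one, Nat.cast_ofNat] at hx ⊢
  rcases hx with hx | hx <;> rintro (h | h) <;> linarith [hx.1, hx.2, h.1, h.2]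

theorem quarterSwap_of_notMem (hx : ∀ n < 4, x ∉ quarter p q n) : quarterSwap p q x = x := by
  rw [quarterSwap, if_neg, if_neg] <;> rintro (h | h) <;> exact hx _ (by norm_num) h

theorem outerFlip_involutive : Involutive (outerFlip p q) := by
  intro x
  by_cases hx : x ∈ quarter p q 0 ∪ quarter p q 3
  · rw [outerFlip_of_mem_outer hx, outerFlip_of_mem_outer, sub_sub_cancel]
    rcases hx with hx | hx
    exacts [Or.inr (reflect_mem_quarter rfl hx), Or.inl (reflect_mem_quarter rfl hx)]
  · have hfix : outerFlip p q x = x := if_neg hx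
    rw [hfix, hfix]

theorem quarterSwap_involutive : Involutive (quarterSwap p q) := by
  intro x
  by_cases h02 : x ∈ quarter p q 0 ∪ quarter p q 2
  · rw [quarterSwap_of_mem_even h02, quarterSwap_of_mem_odd, add_sub_cancel_right]
    exact h02.imp add_mem_quarter_succ add_mem_quarter_succ
  by_cases h13 : x ∈ quarter p q 1 ∪ quarter p q 3
  · rw [quarterSwap_of_mem_odd h13, quarterSwap_of_mem_even, sub_add_cancel]
    exact h13.imp sub_mem_quarter sub_mem_quarter
  · have hfix : quarterSwap p q x = x := by rw [quarterSwap, if_neg h02, if_neg h13]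
    rw [hfix, hfix]

theorem outerFlip_mapsTo : MapsTo (outerFlip p q) (Ioo p q) (Ioo p q) := by
  intro x hx
  by_cases h : x ∈ quarter p q 0 ∪ quarter p q 3
  · rw [outerFlip_of_mem_outer h]
    constructor <;> linarith [hx.1, hx.2]
  · rwa [outerFlip, if_neg h]

theorem quarterSwap_mapsTo : MapsTo (quarterSwap p q) (Ioo p q) (Ioo p q) := by
  intro x hx
  by_cases h02 : x ∈ quarter p q 0 ∪ quarter p q 2
  · rw [quarterSwap_of_mem_even h02]
    rcases h02 with h | h
    exacts [quarter_subset_Ioo (by norm_num) (add_mem_quarter_succ h),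
      quarter_subset_Ioo (by norm_num) (add_mem_quarter_succ h)]
  by_cases h13 : x ∈ quarter p q 1 ∪ quarter p q 3
  · rw [quarterSwap_of_mem_odd h13]
    rcases h13 with h | h
    exacts [quarter_subset_Ioo (by norm_num) (sub_mem_quarter h),
      quarter_subset_Ioo (by norm_num) (sub_mem_quarter h)]
  · rwa [quarterSwap, if_neg h02, if_neg h13]

theorem outerFlip_quarterSwap_outerFlip_quarterSwap (hx : x ∈ quarter p q 0 ∪ quarter p q 1 ∪
    quarter p q 2 ∪ quarter p q 3) :
    outerFlip p q (quarterSwap p q (outerFlip p q (quarterSwap p q x))) = p + q - x := by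
  rcases hx with ((h0 | h1) | h2) | h3
  · have h1 := add_mem_quarter_succ h0
    rw [quarterSwap_of_mem_even (Or.inl h0), outerFlip_of_mem_inner (Or.inl h1),
      quarterSwap_of_mem_odd (Or.inl h1), add_sub_cancel_right, outerFlip_of_mem_outer (Or.inl h0)]
  · have h0 := sub_mem_quarter h1
    have h3 := reflect_mem_quarter (n' := 3) rfl h0
    have h2 := sub_mem_quarter (n := 2) h3
    rw [quarterSwap_of_mem_odd (Or.inl h1), outerFlip_of_mem_outer (Or.inl h0),
      quarterSwap_of_mem_odd (Or.inr h3), outerFlip_of_mem_inner (Or.inr h2)]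
    ring
  · have h3 := add_mem_quarter_succ h2
    have h0 := reflect_mem_quarter (n' := 0) rfl h3
    have h1 := add_mem_quarter_succ h0
    rw [quarterSwap_of_mem_even (Or.inr h2), outerFlip_of_mem_outer (Or.inr h3),
      quarterSwap_of_mem_even (Or.inl h0), outerFlip_of_mem_inner (Or.inl h1)]
    ring
  · have h2 := sub_mem_quarter (n := 2) h3
    rw [quarterSwap_of_mem_odd (Or.inr h3), outerFlip_of_mem_inner (Or.inr h2),
      quarterSwap_of_mem_even (Or.inr h2), sub_add_cancel, outerFlip_of_mem_outer (Or.inr h3)]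

theorem isTranslationOrFlipOn_outerFlip {n : ℕ} (hn : n < 4) :
    IsTranslationOrFlipOn (outerFlip p q) (quarter p q n) := by
  interval_cases n
  · exact Or.inr ⟨p + q, fun x hx => outerFlip_of_mem_outer (Or.inl hx)⟩
  · exact Or.inl ⟨0, fun x hx => by rw [outerFlip_of_mem_inner (Or.inl hx), add_zero]⟩
  · exact Or.inl ⟨0, fun x hx => by rw [outerFlip_of_mem_inner (Or.inr hx), add_zero]⟩
  · exact Or.inr ⟨p + q, fun x hx => outerFlip_of_mem_outer (Or.inr hx)⟩

theorem isTranslationOrFlipOn_quarterSwap {n : ℕ} (hn : n < 4) :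
    IsTranslationOrFlipOn (quarterSwap p q) (quarter p q n) := by
  interval_cases n
  · exact Or.inl ⟨_, fun x hx => quarterSwap_of_mem_even (Or.inl hx)⟩
  · exact Or.inl ⟨_, fun x hx => (quarterSwap_of_mem_odd (Or.inl hx)).trans (sub_eq_add_neg _ _)⟩
  · exact Or.inl ⟨_, fun x hx => quarterSwap_of_mem_even (Or.inr hx)⟩
  · exact Or.inl ⟨_, fun x hx => (quarterSwap_of_mem_odd (Or.inr hx)).trans (sub_eq_add_neg _ _)⟩

end Quarters

section IntervalFamily

variable {ι : Type*} {l r : ι → ℝ}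

variable (l r) in
noncomputable def reflectIoo : ℝ → ℝ :=
  glue (fun k => Ioo (l k) (r k)) fun k x => l k + r k - x

theorem reflectIoo_apply_of_mem (hI : Pairwise (Disjoint on fun k => Ioo (l k) (r k))) {k : ι}
    {x : ℝ} (hx : x ∈ Ioo (l k) (r k)) : reflectIoo l r x = l k + r k - x :=
  glue_apply_of_mem hI hx

theorem reflectIoo_apply_of_forall_notMem {x : ℝ} (hx : ∀ k, x ∉ Ioo (l k) (r k)) :
    reflectIoo l r x = x :=
  glue_apply_of_forall_notMem hx

theorem reflectIoo_involutive (hI : Pairwise (Disjoint on fun k => Ioo (l k) (r k))) :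
    Involutive (reflectIoo l r) :=
  glue_involutive hI (fun _ _ hx => ⟨by linarith [hx.2], by linarith [hx.1]⟩) fun _ _ _ => by ring

variable [Finite ι]

theorem isFIET_reflectIoo (hl : ∀ k, 0 ≤ l k) (hlr : ∀ k, l k ≤ r k) (hr : ∀ k, r k ≤ 1)
    (hI : Pairwise (Disjoint on fun k => Ioo (l k) (r k))) :
    IsFIET ((reflectIoo_involutive hI).toPerm _) :=
  isFIET_of_forall_isTranslationOrFlipOn _ hl hlr hr
    (fun _ hx => reflectIoo_apply_of_forall_notMem hx)
    fun k => Or.inr ⟨l k + r k, fun _ hx => reflectIoo_apply_of_mem hI hx⟩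

theorem isFIET_of_glue_quarters (hl : ∀ k, 0 ≤ l k) (hlr : ∀ k, l k ≤ r k) (hr : ∀ k, r k ≤ 1)
    (hI : Pairwise (Disjoint on fun k => Ioo (l k) (r k))) {F : ι → ℝ → ℝ} (e : Perm ℝ)
    (he : ⇑e = glue (fun k => Ioo (l k) (r k)) F)
    (hfix : ∀ k x, (∀ n < 4, x ∉ quarter (l k) (r k) n) → F k x = x)
    (hF : ∀ k, ∀ n < 4, IsTranslationOrFlipOn (F k) (quarter (l k) (r k) n)) : IsFIET e := by
  have hδ : ∀ k, 0 ≤ (r k - l k) / 4 := fun k => by linarith [hlr k]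
  refine isFIET_of_forall_isTranslationOrFlipOn (ι := ι × Fin 4)
    (l := fun kn => l kn.1 + (kn.2 : ℕ) * ((r kn.1 - l kn.1) / 4))
    (r := fun kn => l kn.1 + ((kn.2 : ℕ) + 1) * ((r kn.1 - l kn.1) / 4)) e
    (fun kn => add_nonneg (hl _) (mul_nonneg (Nat.cast_nonneg _) (hδ _)))
    (fun kn => by linarith [hδ kn.1]) (fun ⟨k, n⟩ => ?_) (fun x hx => ?_) fun ⟨k, n⟩ => ?_
  · have hn : ((n : ℕ) : ℝ) + 1 ≤ 4 := by exact_mod_cast n.isLt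
    nlinarith [hδ k, hr k]
  · rw [he]
    exact glue_apply_eq_self fun k _ => hfix k x fun n hn => hx (k, ⟨n, hn⟩)
  · refine (hF k n n.isLt).congr fun x hx => ?_
    rw [he, glue_apply_of_mem hI (quarter_subset_Ioo n.isLt hx)]

theorem exists_isFIET_feq_reflectIoo_commutator (hl : ∀ k, 0 ≤ l k) (hlr : ∀ k, l k ≤ r k)
    (hr : ∀ k, r k ≤ 1) (hI : Pairwise (Disjoint on fun k => Ioo (l k) (r k))) :
    ∃ u v : Perm ℝ, IsFIET u ∧ IsFIET v ∧ FEq ((reflectIoo_involutive hI).toPerm _) ⁅u, v⁆ := by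
  set S := fun k => Ioo (l k) (r k)
  have hu : Involutive (glue S fun k => outerFlip (l k) (r k)) :=
    glue_involutive hI (fun _ => outerFlip_mapsTo) fun _ x _ => outerFlip_involutive x
  have hv : Involutive (glue S fun k => quarterSwap (l k) (r k)) :=
    glue_involutive hI (fun _ => quarterSwap_mapsTo) fun _ x _ => quarterSwap_involutive x
  refine ⟨hu.toPerm _, hv.toPerm _,
    isFIET_of_glue_quarters hl hlr hr hI _ rfl
      (fun _ _ hx => outerFlip_of_notMem (hx 0 (by norm_num)) (hx 3 (by norm_num)))
      fun _ _ => isTranslationOrFlipOn_outerFlip,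
    isFIET_of_glue_quarters hl hlr hr hI _ rfl (fun _ _ => quarterSwap_of_notMem)
      fun _ _ => isTranslationOrFlipOn_quarterSwap, ?_⟩
  have hcomm : ⇑⁅hu.toPerm _, hv.toPerm _⁆ = glue S fun k =>
      outerFlip (l k) (r k) ∘ quarterSwap (l k) (r k) ∘ outerFlip (l k) (r k) ∘
        quarterSwap (l k) (r k) := by
    change (glue S fun k => outerFlip (l k) (r k)) ∘ (glue S fun k => quarterSwap (l k) (r k)) ∘
      (glue S fun k => outerFlip (l k) (r k)) ∘ (glue S fun k => quarterSwap (l k) (r k)) = _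
    rw [glue_comp hI fun _ => quarterSwap_mapsTo,
      glue_comp hI fun _ => outerFlip_mapsTo.comp quarterSwap_mapsTo,
      glue_comp hI fun _ => quarterSwap_mapsTo.comp (outerFlip_mapsTo.comp quarterSwap_mapsTo)]
  refine (finite_iUnion fun k => toFinite ({l k + (r k - l k) / 4, l k + 2 * ((r k - l k) / 4),
    l k + 3 * ((r k - l k) / 4)} : Set ℝ)).subset fun x hx => ?_
  by_contra hcut
  simp only [mem_iUnion, mem_insert_iff, mem_singleton_iff, not_exists, not_or] at hcut
  refine hx ?_
  rw [hcomm]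
  by_cases hxS : ∃ k, x ∈ S k
  · obtain ⟨k, hk⟩ := hxS
    obtain ⟨h₁, h₂, h₃⟩ := hcut k
    rw [Involutive.coe_toPerm, reflectIoo_apply_of_mem hI hk, glue_apply_of_mem hI hk]
    exact (outerFlip_quarterSwap_outerFlip_quarterSwap (mem_quarter_of_ne hk h₁ h₂ h₃)).symm
  · rw [Involutive.coe_toPerm, reflectIoo_apply_of_forall_notMem (not_exists.1 hxS),
      glue_apply_of_forall_notMem (not_exists.1 hxS)]

end IntervalFamily

section FlippedPieces

variable {m : ℕ}

variable (f : ℝ → ℝ) (a : Fin (m + 2) → ℝ) in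
def flippedPieces : Set (Fin (m + 1)) :=
  {j : Fin (m + 1) | ∃ c, ∀ x ∈ Ioo (a j.castSucc) (a j.succ), f x = c - x}

theorem exists_translation_reflectIoo_flippedPieces {f : ℝ → ℝ} {a : Fin (m + 2) → ℝ}
    (ha : Monotone a)
    (hf : ∀ j : Fin (m + 1), IsTranslationOrFlipOn f (Ioo (a j.castSucc) (a j.succ)))
    (j : Fin (m + 1)) : ∃ c, ∀ x ∈ Ioo (a j.castSucc) (a j.succ),
      f (reflectIoo (fun k : flippedPieces f a => a k.1.castSucc) (fun k => a k.1.succ) x) =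
        x + c := by
  have hJ := pairwise_disjoint_Ioo_castSucc_succ ha
  have hI := hJ.comp_of_injective (Subtype.val_injective (p := (· ∈ flippedPieces f a)))
  by_cases hflip : j ∈ flippedPieces f a
  · obtain ⟨c, hc⟩ := id hflip
    refine ⟨c - (a j.castSucc + a j.succ), fun x hx => ?_⟩
    rw [reflectIoo_apply_of_mem hI (k := ⟨j, hflip⟩) hx,
      hc _ ⟨by linarith [hx.2], by linarith [hx.1]⟩]
    ring
  · obtain ⟨c, hc⟩ := (hf j).resolve_right hflip
    refine ⟨c, fun x hx => ?_⟩
    rw [reflectIoo_apply_of_forall_notMem fun k hk =>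
      (hJ.eq (not_disjoint_iff.2 ⟨x, hk, hx⟩) ▸ hflip) k.2, hc x hx]

end FlippedPieces

theorem FEq.mul_right {f g : Perm ℝ} (h : FEq f g) (e : Perm ℝ) : FEq (f * e) (g * e) :=
  h.preimage e.injective.injOn

/-- Every element of `𝒢̄` is the product of (the class of) an interval exchange
transformation and an involution of `𝒢̄` which is a commutator in `𝒢̄`. -/
theorem FIET_eq_IET_comp_involution (f : Equiv.Perm ℝ) (hf : IsFIET f) :
    ∃ g i : Equiv.Perm ℝ, IsIET g ∧ IsFIET i ∧ FEq (i * i) 1 ∧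
      (∃ u v : Equiv.Perm ℝ, IsFIET u ∧ IsFIET v ∧ FEq i ⁅u, v⁆) ∧
      FEq f (g * i) := by
  obtain ⟨hfix, m, a, ha0, ha1, ha, hpieces⟩ := hf
  set l : flippedPieces f a → ℝ := fun k => a k.1.castSucc
  set r : flippedPieces f a → ℝ := fun k => a k.1.succ
  have hI : Pairwise (Disjoint on fun k => Ioo (l k) (r k)) :=
    (pairwise_disjoint_Ioo_castSucc_succ ha.monotone).comp_of_injective Subtype.val_injective
  have hl : ∀ k, 0 ≤ l k := fun k => ha0 ▸ ha.monotone (Fin.zero_le _)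
  have hlr : ∀ k, l k ≤ r k := fun k => ha.monotone (Fin.castSucc_le_succ _)
  have hr : ∀ k, r k ≤ 1 := fun k => ha1 ▸ ha.monotone (Fin.le_last _)
  set i := (reflectIoo_involutive hI).toPerm _
  have hi : IsFIET i := isFIET_reflectIoo hl hlr hr hI
  have hii : i * i = 1 := Equiv.ext (reflectIoo_involutive hI)
  obtain ⟨g, hg, hfg⟩ := exists_isIET_feq_of_translation_on_pieces (f * i)
    (fun x hx => by rw [Perm.mul_apply, hi.1 x hx, hfix x hx]) ha0 ha1 ha
    (exists_translation_reflectIoo_flippedPieces ha.monotone hpieces)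
  refine ⟨g, i, hg, hi, by simp [hii, FEq],
    exists_isFIET_feq_reflectIoo_commutator hl hlr hr hI, ?_⟩
  simpa [mul_assoc, hii] using hfg.mul_right i
end

section
/- Every interval exchange transformation g ∈ 𝒢_m (m ≥ 2) can be written as a product of at most m−1 restricted rotations. -/
open scoped commutatorElement

open Set

section RestrictedRotation

variable {p d : ℝ} (hpd : p < d)

lemma toIcoMod_mem_Ico_of_lt (y : ℝ) : toIcoMod (sub_pos.2 hpd) p y ∈ Ico p d := by
  simpa using toIcoMod_mem_Ico (sub_pos.2 hpd) p y

lemma toIcoMod_toIcoMod_add {L : ℝ} (hL : 0 < L) (a₁ a₂ b c : ℝ) :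
    toIcoMod hL a₁ (toIcoMod hL a₂ b + c) = toIcoMod hL a₁ (b + c) := by
  rw [toIcoMod_eq_toIcoMod]
  exact ⟨toIcoDiv hL a₂ b, by linear_combination -(toIcoMod_add_toIcoDiv_zsmul hL a₂ b)⟩

noncomputable def rotateIco (α x : ℝ) : ℝ :=
  if x ∈ Ico p d then toIcoMod (sub_pos.2 hpd) p (x + α) else x

lemma rotateIco_neg_rotateIco (α x : ℝ) : rotateIco hpd (-α) (rotateIco hpd α x) = x := by
  by_cases hx : x ∈ Ico p d
  · unfold rotateIco
    rw [if_pos hx, if_pos (toIcoMod_mem_Ico_of_lt hpd _), toIcoMod_toIcoMod_add,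
      add_neg_cancel_right, toIcoMod_eq_self]
    simpa using hx
  · unfold rotateIco
    rw [if_neg hx, if_neg hx]

noncomputable def restrictedRotation (α : ℝ) : Equiv.Perm ℝ where
  toFun := rotateIco hpd α
  invFun := rotateIco hpd (-α)
  left_inv := rotateIco_neg_rotateIco hpd α
  right_inv x := by simpa using rotateIco_neg_rotateIco hpd (-α) x

lemma restrictedRotation_inv_apply (α x : ℝ) :
    (restrictedRotation hpd α)⁻¹ x = restrictedRotation hpd (-α) x := rfl

lemma restrictedRotation_apply_of_notMem {α x : ℝ} (hx : x ∉ Ico p d) :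
    restrictedRotation hpd α x = x :=
  if_neg hx

lemma restrictedRotation_apply_of_add_mem {α x : ℝ} (hx : x ∈ Ico p d)
    (hxα : x + α ∈ Ico p d) : restrictedRotation hpd α x = x + α := by
  change rotateIco hpd α x = x + α
  rw [rotateIco, if_pos hx, toIcoMod_eq_self]
  simpa using hxα

lemma restrictedRotation_apply_of_add_sub_mem {α x : ℝ} (hx : x ∈ Ico p d)
    (hxα : x + α - (d - p) ∈ Ico p d) : restrictedRotation hpd α x = x + α - (d - p) := by
  change rotateIco hpd α x = x + α - (d - p)
  rw [rotateIco, if_pos hx, ← toIcoMod_sub, toIcoMod_eq_self]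
  simpa using hxα

lemma isRestrictedRotation_restrictedRotation (hp : 0 ≤ p) (hd : d ≤ 1) (α : ℝ) :
    IsRestrictedRotation (restrictedRotation hpd α) := by
  have hL := sub_pos.2 hpd
  refine ⟨p, d, toIcoMod hL 0 α, hp, hpd, hd, by simpa using toIcoMod_mem_Ico hL 0 α,
    fun x hx ↦ restrictedRotation_apply_of_notMem hpd hx, fun x hx ↦ ?_⟩
  change rotateIco hpd α x = _
  rw [rotateIco, if_pos hx, add_comm x α, ← toIcoMod_toIcoMod_add hL p 0 α x]
  generalize toIcoMod hL 0 α = β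
  rw [toIcoMod, toIcoDiv_eq_floor, zsmul_eq_mul]
  ring_nf

end RestrictedRotation

lemma Equiv.Perm.apply_mem_of_forall_notMem_eq {α : Type*} {g : Equiv.Perm α} {s : Set α}
    (hg : ∀ x ∉ s, g x = x) {x : α} (hx : x ∈ s) : g x ∈ s := by
  by_contra h
  rw [g.injective (hg _ h)] at h
  exact h hx

section Translation

variable {f : ℝ → ℝ} {t d c : ℝ}

lemma forall_lt_or_forall_le_of_translation_of_avoid {u v q e : ℝ} (hqe : q < e)
    (hf : ∀ x ∈ Ico u v, f x = x + c) (havoid : ∀ x ∈ Ico u v, f x ∉ Ico q e) :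
    (∀ x ∈ Ico u v, f x < q) ∨ ∀ x ∈ Ico u v, e ≤ f x := by
  by_cases hu : u + c < q
  · refine .inl fun x hx ↦ not_le.1 fun hqx ↦ ?_
    have hw : q - c ∈ Ico u v := ⟨by linarith, by linarith [hx.2, hf x hx]⟩
    exact havoid _ hw (by rw [hf _ hw, sub_add_cancel]; exact ⟨le_rfl, hqe⟩)
  · refine .inr fun x hx ↦ not_lt.1 fun hxe ↦ havoid x hx ⟨?_, hxe⟩
    rw [hf x hx]
    linarith [hx.1]

lemma shift_mem_Icc_of_translation_on_last {g : Equiv.Perm ℝ} (h0t : 0 ≤ t) (htd : t < d)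
    (hsupp : ∀ x ∉ Ico 0 d, g x = x) (hlast : ∀ x ∈ Ico t d, g x = x + c) : c ∈ Icc (-t) 0 := by
  have hmaps : ∀ x ∈ Ico t d, g x ∈ Ico 0 d := fun x hx ↦
    Equiv.Perm.apply_mem_of_forall_notMem_eq hsupp ⟨h0t.trans hx.1, hx.2⟩
  constructor
  · linarith [hlast t ⟨le_rfl, htd⟩ ▸ (hmaps t ⟨le_rfl, htd⟩).1]
  · by_contra! hc
    have hx : max t (d - c) ∈ Ico t d := ⟨le_max_left _ _, max_lt htd (by linarith)⟩
    linarith [hlast _ hx ▸ (hmaps _ hx).2, le_max_right t (d - c)]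

lemma apply_notMem_Ico_add_of_translation {g : Equiv.Perm ℝ} (hlast : ∀ x ∈ Ico t d, g x = x + c)
    {x : ℝ} (hx : x ∉ Ico t d) : g x ∉ Ico (t + c) (d + c) := by
  intro hgx
  have hy : g x - c ∈ Ico t d := ⟨by linarith [hgx.1], by linarith [hgx.2]⟩
  have hgy : g (g x - c) = g x := by rw [hlast _ hy, sub_add_cancel]
  exact hx (g.injective hgy ▸ hy)

end Translation

lemma exists_isRestrictedRotation_inv_mul_supported_Ico {g : Equiv.Perm ℝ} {t d c : ℝ}
    (h0t : 0 ≤ t) (htd : t < d) (hd1 : d ≤ 1) (hsupp : ∀ x ∉ Ico 0 d, g x = x)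
    (hlast : ∀ x ∈ Ico t d, g x = x + c) :
    ∃ r : Equiv.Perm ℝ, IsRestrictedRotation r ∧ (∀ x ∉ Ico 0 t, (r⁻¹ * g) x = x) ∧
      ∀ u v c', Ico u v ⊆ Ico 0 t → (∀ x ∈ Ico u v, g x = x + c') →
        ∃ c'', ∀ x ∈ Ico u v, (r⁻¹ * g) x = x + c'' := by
  obtain ⟨htc, hc⟩ := shift_mem_Icc_of_translation_on_last h0t htd hsupp hlast
  have hpd : t + c < d := by linarith
  refine ⟨restrictedRotation hpd c, isRestrictedRotation_restrictedRotation hpd (by linarith) hd1 c,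
    fun x hx ↦ ?_, fun u v c' huv hpiece ↦ ?_⟩
  · rw [Equiv.Perm.mul_apply, restrictedRotation_inv_apply]
    by_cases hxd : x ∈ Ico t d
    · rw [hlast x hxd, restrictedRotation_apply_of_add_mem hpd
        ⟨by linarith [hxd.1], by linarith [hxd.2]⟩ ⟨by linarith [hxd.1], by linarith [hxd.2]⟩]
      ring
    · have hx' : x ∉ Ico 0 d := fun h ↦ hx ⟨h.1, not_le.1 fun hxt ↦ hxd ⟨hxt, h.2⟩⟩
      rw [hsupp x hx', restrictedRotation_apply_of_notMem hpd
        fun h ↦ hx' ⟨by linarith [h.1], h.2⟩]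
  · have havoid : ∀ x ∈ Ico u v, g x ∉ Ico (t + c) (d + c) := fun x hx ↦
      apply_notMem_Ico_add_of_translation hlast fun h ↦ (huv hx).2.not_ge h.1
    rcases forall_lt_or_forall_le_of_translation_of_avoid (by linarith) hpiece havoid
      with hlow | hhigh
    · refine ⟨c', fun x hx ↦ ?_⟩
      rw [Equiv.Perm.mul_apply, restrictedRotation_inv_apply,
        restrictedRotation_apply_of_notMem hpd fun h ↦ (hlow x hx).not_ge h.1, hpiece x hx]
    · refine ⟨c' - c - (d - (t + c)), fun x hx ↦ ?_⟩
      have hgd : g x < d :=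
        (Equiv.Perm.apply_mem_of_forall_notMem_eq hsupp ⟨(huv hx).1, (huv hx).2.trans htd⟩).2
      have hgc := hhigh x hx
      rw [Equiv.Perm.mul_apply, restrictedRotation_inv_apply,
        restrictedRotation_apply_of_add_sub_mem hpd ⟨by linarith, hgd⟩
          ⟨by linarith, by linarith⟩, hpiece x hx]
      ring

theorem exists_isRestrictedRotation_prod_eq_of_piecewise_translation (k : ℕ)
    (a : Fin (k + 2) → ℝ) (ha0 : a 0 = 0) (ha1 : a (Fin.last (k + 1)) ≤ 1) (ha : StrictMono a)
    (g : Equiv.Perm ℝ) (hsupp : ∀ x ∉ Ico 0 (a (Fin.last (k + 1))), g x = x)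
    (hg : ∀ i : Fin (k + 1), ∃ c, ∀ x ∈ Ico (a i.castSucc) (a i.succ), g x = x + c) :
    ∃ l : List (Equiv.Perm ℝ), l.length ≤ k ∧ (∀ r ∈ l, IsRestrictedRotation r) ∧ g = l.prod := by
  induction k generalizing g with
  | zero =>
    obtain ⟨c, hc⟩ := hg 0
    have h0 : a 0 < a (Fin.last 1) := ha (by decide)
    simp only [Fin.castSucc_zero, Fin.succ_zero_eq_one, ha0] at hc h0
    obtain ⟨hc_ge, hc_le⟩ := shift_mem_Icc_of_translation_on_last le_rfl h0 (ha0 ▸ hsupp) hc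
    refine ⟨[], le_rfl, by simp, Equiv.ext fun x ↦ ?_⟩
    by_cases hx : x ∈ Ico 0 (a 1)
    · simp [hc x hx, le_antisymm hc_le (by simpa using hc_ge)]
    · simpa using hsupp x hx
  | succ k ih =>
    obtain ⟨c, hc⟩ := hg (Fin.last (k + 1))
    have h0t : 0 ≤ a (Fin.last (k + 1)).castSucc := ha0 ▸ ha.monotone (Fin.zero_le _)
    obtain ⟨r, hr, hsupp', hpieces⟩ := exists_isRestrictedRotation_inv_mul_supported_Ico h0t
      (ha Fin.castSucc_lt_succ) ha1 (ha0 ▸ hsupp) hc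
    obtain ⟨l, hl, hlr, hprod⟩ := ih (Fin.init a) ha0 (ha1.trans' (ha.monotone (Fin.le_last _)))
      (ha.comp Fin.strictMono_castSucc) (r⁻¹ * g) hsupp' fun j ↦ by
        obtain ⟨cj, hcj⟩ := hg j.castSucc
        rw [Fin.succ_castSucc] at hcj
        exact hpieces _ _ cj (Ico_subset_Ico (ha0 ▸ ha.monotone (Fin.zero_le _))
          (ha.monotone (Fin.castSucc_le_castSucc_iff.2 (Fin.le_last _)))) hcj
    exact ⟨r :: l, by simpa using hl, List.forall_mem_cons.2 ⟨hr, hlr⟩,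
      by rw [List.prod_cons, ← hprod, mul_inv_cancel_left]⟩

theorem IET_prod_of_restricted_rotations_general (m : ℕ)
    (g : Equiv.Perm ℝ) (hg : MemGm m g) :
    ∃ l : List (Equiv.Perm ℝ), l.length ≤ m - 1 ∧
      (∀ r ∈ l, IsRestrictedRotation r) ∧ g = l.prod := by
  obtain ⟨hsupp, k, a, hkm, ha0, ha1, ha, hpieces⟩ := hg
  obtain ⟨l, hl, hlr, rfl⟩ := exists_isRestrictedRotation_prod_eq_of_piecewise_translation k a ha0
    ha1.le ha g (ha1 ▸ hsupp) hpieces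
  exact ⟨l, by omega, hlr, rfl⟩

/-- Every `g ∈ 𝒢_m` (`m ≥ 2`) is a product of at most `m - 1` restricted rotations. -/
theorem IET_prod_of_restricted_rotations (m : ℕ) (hm : 2 ≤ m)
    (g : Equiv.Perm ℝ) (hg : MemGm m g) :
    ∃ l : List (Equiv.Perm ℝ), l.length ≤ m - 1 ∧
      (∀ r ∈ l, IsRestrictedRotation r) ∧ g = l.prod :=
  IET_prod_of_restricted_rotations_general m g hg
end
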